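/- arXiv:1009.2778 — 2 statements merged into one kernel-verified Lean document; each statement's English description precedes it below -/
import Mathlib

section
/- Let f(x,y,u) = y(y−1)/(x−y) and h(x,y,u) = (2xy − x − y)/(x−y)^2 be the data of the Gibbons–Tsarev system (33). Then the extension ∂_i v = g(p_i, u, v) ∂_i u with g(p,u,v) = 1/p^2 + v/p is compatible with this system: the expression E(x,y) = g_1(x,u,v)·f(y,x,u) + g_2(x,u,v) + g_3(x,u,v)·g(y,u,v) + g(x,u,v)·h(x,y,u) satisfies E(x,y) = E(y,x) for all distinct nonzero x, y and all u, v. -/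
/-! With `g = 1/p² + v/p` one has `g₁ = -2/p³ - v/p²`, `g₂ = 0`, `g₃ = 1/p`. Substituting and
clearing denominators writes `E(x,y)` as a rational function whose numerators, after
expansion, are symmetric polynomials in `x` and `y`. -/

/-- Partial derivative of `g(p,u,v)` in its first argument. -/
noncomputable def e1 (g : ℝ → ℝ → ℝ → ℝ) (p u v : ℝ) : ℝ := deriv (fun s => g s u v) p
/-- Partial derivative of `g(p,u,v)` in its second argument. -/
noncomputable def e2 (g : ℝ → ℝ → ℝ → ℝ) (p u v : ℝ) : ℝ := deriv (fun s => g p s v) u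
/-- Partial derivative of `g(p,u,v)` in its third argument. -/
noncomputable def e3 (g : ℝ → ℝ → ℝ → ℝ) (p u v : ℝ) : ℝ := deriv (fun s => g p u s) v

/-- The compatibility expression `E(x,y)` for an extension `∂ᵢv = g(pᵢ,u,v) ∂ᵢu` of a
one-field Gibbons–Tsarev system with data `f`, `h`. -/
noncomputable def extE (f h g : ℝ → ℝ → ℝ → ℝ) (x y u v : ℝ) : ℝ :=
  e1 g x u v * f y x u + e2 g x u v + e3 g x u v * g y u v + g x u v * h x y u

section

variable {g : ℝ → ℝ → ℝ → ℝ} (hg : ∀ p u v : ℝ, g p u v = 1 / p ^ 2 + v / p)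
include hg

lemma e1_eq {p : ℝ} (hp : p ≠ 0) (u v : ℝ) : e1 g p u v = -2 / p ^ 3 - v / p ^ 2 := by
  have hderiv := ((hasDerivAt_pow 2 p).fun_inv (pow_ne_zero 2 hp)).fun_add
    ((hasDerivAt_inv hp).const_mul v)
  rw [e1, funext fun s => hg s u v]
  simp only [div_eq_mul_inv, one_mul]
  rw [hderiv.deriv]
  field_simp
  ring

lemma e2_eq (p u v : ℝ) : e2 g p u v = 0 := by
  simp only [e2, hg, deriv_const]

lemma e3_eq (p u v : ℝ) : e3 g p u v = 1 / p := by
  have hderiv : HasDerivAt (fun s => 1 / p ^ 2 + s / p) (1 / p) v :=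
    ((hasDerivAt_id v).div_const p).const_add _
  rw [e3, funext fun s => hg p u s, hderiv.deriv]

end

lemma extE_eq {f h g : ℝ → ℝ → ℝ → ℝ}
    (hf : ∀ x y u : ℝ, f x y u = y * (y - 1) / (x - y))
    (hh : ∀ x y u : ℝ, h x y u = (2 * x * y - x - y) / (x - y) ^ 2)
    (hg : ∀ p u v : ℝ, g p u v = 1 / p ^ 2 + v / p)
    {x y : ℝ} (hxy : x ≠ y) (hx : x ≠ 0) (hy : y ≠ 0) (u v : ℝ) :
    extE f h g x y u v =
      (x ^ 3 + y ^ 3 - 2 * x * y * (x + y) + 2 * x ^ 2 * y ^ 2) / (x ^ 2 * y ^ 2 * (x - y) ^ 2)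
        + v * (x * y * (x + y) + (x - y) ^ 2 - 2 * x * y) / (x * y * (x - y) ^ 2) := by
  have hxy' : x - y ≠ 0 := sub_ne_zero.mpr hxy
  have hyx : y - x ≠ 0 := sub_ne_zero.mpr hxy.symm
  rw [extE, e1_eq hg hx, e2_eq hg, e3_eq hg, hf, hh, hg, hg]
  field_simp
  ring

/-- for the Gibbons–Tsarev system (33) with `f(x,y,u) = y(y−1)/(x−y)`,
`h(x,y,u) = (2xy−x−y)/(x−y)²`, the extension `g(p,u,v) = 1/p² + v/p` is compatible:
`E(x,y) = E(y,x)` for distinct nonzero `x, y` and all `u, v`. -/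
theorem stmt_4 (f h g : ℝ → ℝ → ℝ → ℝ)
    (hf : ∀ x y u : ℝ, f x y u = y * (y - 1) / (x - y))
    (hh : ∀ x y u : ℝ, h x y u = (2 * x * y - x - y) / (x - y) ^ 2)
    (hg : ∀ p u v : ℝ, g p u v = 1 / p ^ 2 + v / p) :
    ∀ (x y u v : ℝ), x ≠ y → x ≠ 0 → y ≠ 0 →
      extE f h g x y u v = extE f h g y x u v := by
  intro x y u v hxy hx hy
  rw [extE_eq hf hh hg hxy hx hy, extE_eq hf hh hg hxy.symm hy hx]
  ring
end

section
/- Potential form of the simplest weakly nonlinear two-component system: let Z be a C² function on an open subset of ℝ³ (coordinates x, y, t) with Z_t > 0 and Z_y < 0, and define u = log(Z_t), v = log(−Z_y). Then the pair (u, v) satisfies the system u_y = e^v·(v_x − u_x), v_t = e^u·(u_x − v_x) if and only if Z satisfies the single second-order quasilinear equation Z_{yt} = Z_y·Z_{xt} − Z_t·Z_{xy}. -/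
/-- Partial derivative in `x` (first coordinate of `ℝ³ = ℝ × ℝ × ℝ` with coordinates
`(x, y, t)`). -/
noncomputable def pX (F : ℝ × ℝ × ℝ → ℝ) (p : ℝ × ℝ × ℝ) : ℝ := fderiv ℝ F p (1, 0, 0)
/-- Partial derivative in `y`. -/
noncomputable def pY (F : ℝ × ℝ × ℝ → ℝ) (p : ℝ × ℝ × ℝ) : ℝ := fderiv ℝ F p (0, 1, 0)
/-- Partial derivative in `t`. -/
noncomputable def pT (F : ℝ × ℝ × ℝ → ℝ) (p : ℝ × ℝ × ℝ) : ℝ := fderiv ℝ F p (0, 0, 1)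

/-!
With `T = Z_t`, `Y = Z_y` one has `e^u = T`, `e^v = -Y` (note `log (-Y) = log Y`), so
`u_y = Z_yt / T`, `u_x = Z_xt / T`, `v_x = Z_xy / Y`, `v_t = Z_yt / Y` by symmetry of second
derivatives. After clearing the nonzero denominators `T` and `Y`, each of the two equations of
the system becomes `Z_yt = Y Z_xt - T Z_xy`.
-/

section SecondDerivatives

variable {E F : Type*} [NormedAddCommGroup E] [NormedSpace ℝ E]
  [NormedAddCommGroup F] [NormedSpace ℝ F] {f : E → F} {p : E}

theorem fderiv_fderiv_apply_eq (hf : ContDiffAt ℝ 2 f p) (v w : E) :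
    fderiv ℝ (fun q => fderiv ℝ f q v) p w = fderiv ℝ (fderiv ℝ f) p w v := by
  have hdiff : DifferentiableAt ℝ (fderiv ℝ f) p :=
    (hf.fderiv_right (m := 1) le_rfl).differentiableAt one_ne_zero
  rw [fderiv_clm_apply hdiff (differentiableAt_const v)]
  simp

theorem fderiv_fderiv_apply_comm (hf : ContDiffAt ℝ 2 f p) (v w : E) :
    fderiv ℝ (fun q => fderiv ℝ f q v) p w = fderiv ℝ (fun q => fderiv ℝ f q w) p v := by
  rw [fderiv_fderiv_apply_eq hf, fderiv_fderiv_apply_eq hf]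
  exact (hf.isSymmSndFDerivAt (by simp)).eq w v

theorem fderiv_log_fderiv_apply {f : E → ℝ} (hf : ContDiffAt ℝ 2 f p) {v : E}
    (hv : fderiv ℝ f p v ≠ 0) (w : E) :
    fderiv ℝ (fun q => Real.log (fderiv ℝ f q v)) p w =
      fderiv ℝ (fun q => fderiv ℝ f q w) p v / fderiv ℝ f p v := by
  have hdiff : DifferentiableAt ℝ (fun q => fderiv ℝ f q v) p :=
    ((hf.fderiv_right (m := 1) le_rfl).differentiableAt one_ne_zero).clm_apply
      (differentiableAt_const v)
  rw [fderiv.log hdiff hv, FunLike.coe_smul, Pi.smul_apply, smul_eq_mul,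
    fderiv_fderiv_apply_comm hf, inv_mul_eq_div]

end SecondDerivatives

theorem system_iff_potential_eq {T Y A B C : ℝ} (hT : T ≠ 0) (hY : Y ≠ 0) :
    (A / T = -Y * (C / Y - B / T) ∧ A / Y = T * (B / T - C / Y)) ↔ A = Y * B - T * C := by
  constructor
  · rintro ⟨-, h⟩
    field_simp at h
    linear_combination h
  · rintro rfl
    constructor
    · field_simp
      ring
    · field_simp

/-- potential form of the simplest weakly nonlinear two-component system:
for `Z` C² on an open `Ω ⊆ ℝ³` with `Z_t > 0`, `Z_y < 0`, setting `u = log Z_t`,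
`v = log(−Z_y)`, the pair `(u,v)` satisfies `u_y = e^v (v_x − u_x)`,
`v_t = e^u (u_x − v_x)` if and only if `Z_{yt} = Z_y Z_{xt} − Z_t Z_{xy}`. -/
theorem stmt_10 (Ω : Set (ℝ × ℝ × ℝ)) (hΩ : IsOpen Ω)
    (Z : ℝ × ℝ × ℝ → ℝ) (hZ : ContDiffOn ℝ 2 Z Ω)
    (hZt : ∀ p ∈ Ω, 0 < pT Z p) (hZy : ∀ p ∈ Ω, pY Z p < 0)
    (u v : ℝ × ℝ × ℝ → ℝ)
    (hu : ∀ p, u p = Real.log (pT Z p))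
    (hv : ∀ p, v p = Real.log (-(pY Z p))) :
    ∀ p ∈ Ω,
      (pY u p = Real.exp (v p) * (pX v p - pX u p) ∧
        pT v p = Real.exp (u p) * (pX u p - pX v p))
      ↔ pT (fun q => pY Z q) p =
          pY Z p * pT (fun q => pX Z q) p - pT Z p * pY (fun q => pX Z q) p := by
  intro p hp
  have hZ2 : ContDiffAt ℝ 2 Z p := hZ.contDiffAt (hΩ.mem_nhds hp)
  have hT := hZt p hp
  have hY := hZy p hp
  have hexp_u : Real.exp (u p) = pT Z p := by rw [hu, Real.exp_log hT]
  have hexp_v : Real.exp (v p) = -pY Z p := by rw [hv, Real.exp_log (neg_pos.2 hY)]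
  rw [hexp_u, hexp_v]
  obtain rfl : u = fun q => Real.log (pT Z q) := funext hu
  obtain rfl : v = fun q => Real.log (pY Z q) :=
    funext fun q => (hv q).trans (Real.log_neg_eq_log _)
  have hu_y := fderiv_log_fderiv_apply hZ2 hT.ne' (0, 1, 0)
  have hu_x := fderiv_log_fderiv_apply hZ2 hT.ne' (1, 0, 0)
  have hv_x := fderiv_log_fderiv_apply hZ2 hY.ne (1, 0, 0)
  have hv_t := fderiv_log_fderiv_apply hZ2 hY.ne (0, 0, 1)
  rw [fderiv_fderiv_apply_comm hZ2] at hv_t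
  simp only [pX, pY, pT] at hT hY hu_y hu_x hv_x hv_t ⊢
  rw [hu_y, hu_x, hv_x, hv_t]
  exact system_iff_potential_eq hT.ne' hY.ne
end
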